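/- arXiv:2405.15735 — 4 statements merged into one kernel-verified Lean document; each statement's English description precedes it below -/
import Mathlib

section
/- Let A and B be real symmetric n×n matrices with B positive definite, let P be an injective linear map from ℝ^m to ℝⁿ (m ≤ n), and set A_V := PᵀAP and B_V := PᵀBP, which is again symmetric with B_V positive definite. Let λ₁ ≤ … ≤ λ_n be the generalized eigenvalues of (A,B) and μ₁ ≤ … ≤ μ_m those of (A_V,B_V). Then for every ℓ ∈ {1,…,m}, λ_ℓ ≤ μ_ℓ. -/
open Matrix

open scoped ComplexOrder in
/-- The positive semidefinite square root of a positive semidefinite matrix (as defined in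
Mathlib of December 2024; since removed from Mathlib). -/
noncomputable def Matrix.PosSemidef.sqrt {n : Type*} [Fintype n] [DecidableEq n]
    {𝕜 : Type*} [RCLike 𝕜] {A : Matrix n n 𝕜} (hA : A.PosSemidef) : Matrix n n 𝕜 :=
  hA.1.eigenvectorUnitary.1 * diagonal ((↑) ∘ (Real.sqrt ∘ hA.1.eigenvalues)) *
    (star hA.1.eigenvectorUnitary : Matrix n n 𝕜)

/-! With `X = B^{1/2}`, `Y = B_V^{1/2}` and `M = X P Y⁻¹` one has `MᵀM = 1` and
`Mᵀ (X⁻¹ A X⁻¹) M = Y⁻¹ (PᵀAP) Y⁻¹`, a compression of `X⁻¹ A X⁻¹` along the isometry `M`.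
The eigenvectors of the compression with eigenvalue `≤ μ_ℓ` span a space of dimension at least
`ℓ + 1`, while at most `ℓ` eigenvectors of `X⁻¹ A X⁻¹` have eigenvalue `< λ_ℓ`; so some nonzero
`z` in that span has `M z` orthogonal to all of them, and comparing the Rayleigh quotients at `z`
and `M z` gives `λ_ℓ ≤ μ_ℓ`. -/

open Finset Module
open scoped RealInnerProductSpace

theorem Module.exists_ne_zero_forall_eq_zero {K V ι : Type*} [Field K] [AddCommGroup V]
    [Module K V] [FiniteDimensional K V] [Fintype ι] (φ : ι → V →ₗ[K] K)
    (h : Fintype.card ι < finrank K V) : ∃ v ≠ 0, ∀ i, φ i v = 0 := by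
  have hker : LinearMap.ker (LinearMap.pi φ) ≠ ⊥ :=
    LinearMap.ker_ne_bot_of_finrank_lt (by rwa [Module.finrank_fintype_fun_eq_card])
  obtain ⟨v, hv, hv0⟩ := Submodule.exists_mem_ne_zero_of_ne_bot hker
  exact ⟨v, hv0, fun i => congr_fun (LinearMap.mem_ker.mp hv) i⟩

theorem Monotone.card_filter_lt_le {n : ℕ} {α : Type*} [LinearOrder α] {f : Fin n → α}
    (hf : Monotone f) (a : Fin n) : #{i | f i < f a} ≤ a := by
  calc #{i | f i < f a} ≤ #(Iio a) :=
        card_le_card fun i hi =>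
          mem_Iio.mpr (lt_of_not_ge fun hai => (mem_filter.mp hi).2.not_ge (hf hai))
    _ = a := Fin.card_Iio a

theorem Monotone.succ_le_card_filter_le {n : ℕ} {α : Type*} [LinearOrder α] {f : Fin n → α}
    (hf : Monotone f) (a : Fin n) : (a : ℕ) + 1 ≤ #{i | f i ≤ f a} := by
  calc (a : ℕ) + 1 = #(Iic a) := (Fin.card_Iic a).symm
    _ ≤ #{i | f i ≤ f a} :=
        card_le_card fun i hi => by simpa using hf (mem_Iic.mp hi)

namespace OrthonormalBasis

variable {E F ι κ : Type*} [NormedAddCommGroup E] [InnerProductSpace ℝ E] [NormedAddCommGroup F]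
  [InnerProductSpace ℝ F] [Fintype ι] [Fintype κ]
  {b : OrthonormalBasis ι ℝ E} {T : E →ₗ[ℝ] E} {f : ι → ℝ}

theorem inner_map_self_eq_sum (hT : ∀ i, T (b i) = f i • b i) (x : E) :
    ⟪T x, x⟫ = ∑ i, f i * ⟪b i, x⟫ ^ 2 := by
  conv_lhs => rw [← b.sum_repr' x]
  simp only [map_sum, map_smul, hT, smul_smul, sum_inner, real_inner_smul_left]
  refine Finset.sum_congr rfl fun i _ => ?_
  rw [b.sum_repr']
  ring

theorem mul_norm_sq_le_inner_map_self (hT : ∀ i, T (b i) = f i • b i) {c : ℝ} {x : E}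
    (hx : ∀ i, f i < c → ⟪b i, x⟫ = 0) : c * ‖x‖ ^ 2 ≤ ⟪T x, x⟫ := by
  rw [inner_map_self_eq_sum hT, ← b.sum_sq_inner_right, mul_sum]
  refine sum_le_sum fun i _ => ?_
  by_cases hi : f i < c
  · simp [hx i hi]
  · exact mul_le_mul_of_nonneg_right (not_lt.mp hi) (sq_nonneg _)

theorem inner_map_self_le_mul_norm_sq (hT : ∀ i, T (b i) = f i • b i) {c : ℝ} {x : E}
    (hx : ∀ i, c < f i → ⟪b i, x⟫ = 0) : ⟪T x, x⟫ ≤ c * ‖x‖ ^ 2 := by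
  rw [inner_map_self_eq_sum hT, ← b.sum_sq_inner_right, mul_sum]
  refine sum_le_sum fun i _ => ?_
  by_cases hi : c < f i
  · simp [hx i hi]
  · exact mul_le_mul_of_nonneg_right (not_lt.mp hi) (sq_nonneg _)

theorem le_of_card_lt_of_compression (hT : ∀ i, T (b i) = f i • b i)
    {b' : OrthonormalBasis κ ℝ F} {T' : F →ₗ[ℝ] F} {g : κ → ℝ} (hT' : ∀ j, T' (b' j) = g j • b' j)
    (J : F →ₗᵢ[ℝ] E) (hJ : ∀ z, ⟪T (J z), J z⟫ = ⟪T' z, z⟫) {a c : ℝ}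
    (hcard : #{i | f i < a} < #{j | g j ≤ c}) : a ≤ c := by
  let φ : {j // c < g j} ⊕ {i // f i < a} → F →ₗ[ℝ] ℝ :=
    Sum.elim (fun j => innerₗ F (b' j)) (fun i => innerₗ E (b i) ∘ₗ J.toLinearMap)
  have hφ : Fintype.card ({j // c < g j} ⊕ {i // f i < a}) < finrank ℝ F := by
    have hsplit := card_filter_add_card_filter_not (s := univ) fun j => g j ≤ c
    simp only [not_le] at hsplit
    rw [Fintype.card_sum, Fintype.card_subtype, Fintype.card_subtype,
      finrank_eq_card_basis b'.toBasis, ← card_univ]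
    omega
  have : FiniteDimensional ℝ F := Module.Finite.of_basis b'.toBasis
  obtain ⟨z, hz0, hz⟩ := Module.exists_ne_zero_forall_eq_zero φ hφ
  have hupper : ⟪T' z, z⟫ ≤ c * ‖z‖ ^ 2 :=
    inner_map_self_le_mul_norm_sq hT' fun j hj => hz (Sum.inl ⟨j, hj⟩)
  have hlower : a * ‖J z‖ ^ 2 ≤ ⟪T (J z), J z⟫ :=
    mul_norm_sq_le_inner_map_self hT fun i hi => hz (Sum.inr ⟨i, hi⟩)
  rw [J.norm_map, hJ] at hlower
  exact le_of_mul_le_mul_right (hlower.trans hupper) (by positivity)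

end OrthonormalBasis

namespace Matrix

variable {n m : Type*} [Fintype n] [Fintype m] [DecidableEq m]

section Sqrt

open scoped ComplexOrder MatrixOrder

theorem PosSemidef.sqrt_eq_cfcSqrt [DecidableEq n] {𝕜 : Type*} [RCLike 𝕜] {A : Matrix n n 𝕜}
    (hA : A.PosSemidef) : hA.sqrt = CFC.sqrt A := by
  rw [CFC.sqrt_eq_cfc, cfc_nnreal_eq_real _ A, hA.1.cfc_eq, IsHermitian.cfc,
    Unitary.conjStarAlgAut_apply, PosSemidef.sqrt]
  congr 3
  funext i
  simp [Real.coe_sqrt, hA.eigenvalues_nonneg]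

theorem PosSemidef.sqrt_mul_self [DecidableEq n] {𝕜 : Type*} [RCLike 𝕜] {A : Matrix n n 𝕜}
    (hA : A.PosSemidef) : hA.sqrt * hA.sqrt = A := by
  rw [hA.sqrt_eq_cfcSqrt]
  exact CFC.sqrt_mul_sqrt_self A hA.nonneg

theorem PosDef.posDef_sqrt [DecidableEq n] {𝕜 : Type*} [RCLike 𝕜] {A : Matrix n n 𝕜}
    (hA : A.PosDef) : hA.posSemidef.sqrt.PosDef := by
  rw [PosSemidef.sqrt_eq_cfcSqrt]
  exact hA.isStrictlyPositive.sqrt.posDef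

end Sqrt

section Congruence

variable {R : Type*} [CommRing R] {S : Matrix n n R} {T : Matrix m m R}

theorem transpose_mul_self_eq_one_of_mul_self_eq (P : Matrix n m R) (hS : Sᵀ = S)
    (hT : Tᵀ = T) (hTu : IsUnit T.det) (hST : T * T = Pᵀ * (S * S) * P) :
    (S * P * T⁻¹)ᵀ * (S * P * T⁻¹) = 1 := by
  calc (S * P * T⁻¹)ᵀ * (S * P * T⁻¹) = T⁻¹ * (Pᵀ * (S * S) * P) * T⁻¹ := by
        simp only [transpose_mul, transpose_nonsing_inv, hS, hT, Matrix.mul_assoc]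
    _ = 1 := by
        rw [← hST, Matrix.mul_assoc, Matrix.mul_assoc, nonsing_inv_mul_cancel_left _ _ hTu,
          mul_nonsing_inv _ hTu]

theorem transpose_mul_inv_conj_mul_eq [DecidableEq n] (A : Matrix n n R) (P : Matrix n m R)
    (hS : Sᵀ = S) (hT : Tᵀ = T) (hSu : IsUnit S.det) :
    (S * P * T⁻¹)ᵀ * (S⁻¹ * A * S⁻¹) * (S * P * T⁻¹) = T⁻¹ * (Pᵀ * A * P) * T⁻¹ := by
  simp only [transpose_mul, transpose_nonsing_inv, hS, hT, Matrix.mul_assoc,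
    mul_nonsing_inv_cancel_left _ _ hSu, nonsing_inv_mul_cancel_left _ _ hSu]

end Congruence

theorem inner_toEuclideanLin_toEuclideanLin [DecidableEq n] (C : Matrix n n ℝ)
    (M : Matrix n m ℝ) (z w : EuclideanSpace ℝ m) :
    ⟪toEuclideanLin C (toEuclideanLin M z), toEuclideanLin M w⟫ =
      ⟪toEuclideanLin (Mᵀ * C * M) z, w⟫ := by
  rw [← LinearMap.adjoint_inner_left, ← toEuclideanLin_conjTranspose_eq_adjoint,
    conjTranspose_eq_transpose_of_trivial, toLpLin_mul_same, toLpLin_mul_same]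
  rfl

theorem IsHermitian.toEuclideanLin_eigenvectorBasis [DecidableEq n] {𝕜 : Type*} [RCLike 𝕜]
    {A : Matrix n n 𝕜} (hA : A.IsHermitian) (i : n) :
    toEuclideanLin A (hA.eigenvectorBasis i) = hA.eigenvalues i • hA.eigenvectorBasis i := by
  rw [toLpLin_apply, hA.mulVec_eigenvectorBasis]
  rfl

end Matrix

theorem pencil_galerkin_monotone_general {n m : ℕ} (hmn : m ≤ n)
    (A B : Matrix (Fin n) (Fin n) ℝ)
    (hB : B.PosDef)
    (P : Matrix (Fin n) (Fin m) ℝ)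
    (hBV : (Pᵀ * B * P).PosDef)
    (lam : Fin n → ℝ) (mu : Fin m → ℝ)
    (hlam_mono : Monotone lam) (hmu_mono : Monotone mu)
    (hC : ((hB.posSemidef.sqrt)⁻¹ * A * (hB.posSemidef.sqrt)⁻¹).IsHermitian)
    (hCV : ((hBV.posSemidef.sqrt)⁻¹ * (Pᵀ * A * P) * (hBV.posSemidef.sqrt)⁻¹).IsHermitian)
    (hlam_eig : ∃ σ : Equiv.Perm (Fin n), ∀ i, lam i = hC.eigenvalues (σ i))
    (hmu_eig : ∃ σ : Equiv.Perm (Fin m), ∀ i, mu i = hCV.eigenvalues (σ i)) :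
    ∀ ℓ : Fin m, lam (Fin.castLE hmn ℓ) ≤ mu ℓ := by
  obtain ⟨σ, hσ⟩ := hlam_eig
  obtain ⟨τ, hτ⟩ := hmu_eig
  intro ℓ
  set X := hB.posSemidef.sqrt
  set Y := hBV.posSemidef.sqrt
  have hX : X.PosDef := hB.posDef_sqrt
  have hY : Y.PosDef := hBV.posDef_sqrt
  have hXt : Xᵀ = X := by simpa using hX.isHermitian.eq
  have hYt : Yᵀ = Y := by simpa using hY.isHermitian.eq
  have hXu : IsUnit X.det := (isUnit_iff_isUnit_det X).mp hX.isUnit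
  have hYu : IsUnit Y.det := (isUnit_iff_isUnit_det Y).mp hY.isUnit
  set M := X * P * Y⁻¹
  have hMM : Mᵀ * M = 1 := transpose_mul_self_eq_one_of_mul_self_eq P hXt hYt hYu
    (by rw [hBV.posSemidef.sqrt_mul_self, hB.posSemidef.sqrt_mul_self])
  let J := (toEuclideanLin M).isometryOfInner fun z w => by
    simpa [hMM] using inner_toEuclideanLin_toEuclideanLin 1 M z w
  refine OrthonormalBasis.le_of_card_lt_of_compression (b := hC.eigenvectorBasis.reindex σ.symm)
    (T := toEuclideanLin (X⁻¹ * A * X⁻¹)) (T' := toEuclideanLin (Y⁻¹ * (Pᵀ * A * P) * Y⁻¹))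
    (f := lam) (fun i => ?_) (b' := hCV.eigenvectorBasis.reindex τ.symm) (g := mu) (fun j => ?_)
    J (fun z => ?_) ((hlam_mono.card_filter_lt_le _).trans_lt (hmu_mono.succ_le_card_filter_le ℓ))
  · simpa [hσ] using hC.toEuclideanLin_eigenvectorBasis (σ i)
  · simpa [hτ] using hCV.toEuclideanLin_eigenvectorBasis (τ j)
  · rw [← transpose_mul_inv_conj_mul_eq A P hXt hYt hXu]
    exact inner_toEuclideanLin_toEuclideanLin _ M z z

/-- **Galerkin monotonicity of generalized eigenvalues.**
Let `A, B` be real symmetric `n×n` with `B` positive definite, let `P : ℝ^m → ℝ^n`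
be injective (`m ≤ n`), and set `A_V = PᵀAP`, `B_V = PᵀBP` (symmetric, with `B_V`
positive definite).  If `λ₁ ≤ … ≤ λ_n` are the generalized eigenvalues of `(A,B)` and
`μ₁ ≤ … ≤ μ_m` those of `(A_V, B_V)`, then `λ_ℓ ≤ μ_ℓ` for every `ℓ ∈ {1,…,m}`. -/
theorem pencil_galerkin_monotone {n m : ℕ} (hmn : m ≤ n)
    (A B : Matrix (Fin n) (Fin n) ℝ)
    (hA : A.IsSymm) (hB : B.PosDef)
    (P : Matrix (Fin n) (Fin m) ℝ) (hP : Function.Injective P.mulVec)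
    (hAV : (Pᵀ * A * P).IsSymm) (hBV : (Pᵀ * B * P).PosDef)
    (lam : Fin n → ℝ) (mu : Fin m → ℝ)
    (hlam_mono : Monotone lam) (hmu_mono : Monotone mu)
    (hC : ((hB.posSemidef.sqrt)⁻¹ * A * (hB.posSemidef.sqrt)⁻¹).IsHermitian)
    (hCV : ((hBV.posSemidef.sqrt)⁻¹ * (Pᵀ * A * P) * (hBV.posSemidef.sqrt)⁻¹).IsHermitian)
    (hlam_eig : ∃ σ : Equiv.Perm (Fin n), ∀ i, lam i = hC.eigenvalues (σ i))
    (hmu_eig : ∃ σ : Equiv.Perm (Fin m), ∀ i, mu i = hCV.eigenvalues (σ i)) :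
    ∀ ℓ : Fin m, lam (Fin.castLE hmn ℓ) ≤ mu ℓ :=
  pencil_galerkin_monotone_general hmn A B hB P hBV lam mu hlam_mono hmu_mono hC hCV hlam_eig
    hmu_eig
end

section
/- Let z, p : ℝ² → ℝ be differentiable at a point v ∈ ℝ², let M > 0 and c > 0, and suppose: |(∂z/∂v_k)(v)| ≤ M and |(∂p/∂v_k)(v)| ≤ M for k = 1,2; |(∂z/∂v_k)(v) − (∂p/∂v_k)(v)| ≤ ε for k = 1,2 with ε ≥ 0; and det g(z)(v) ≥ c and det g(p)(v) ≥ c. Then the graph metrics g(z)(v) and g(p)(v) are invertible, and there is a constant C, depending only on M and c, such that for all q, s ∈ {1,2}, the entries of the inverse matrices satisfy |(g(z)(v)⁻¹)_{qs} − (g(p)(v)⁻¹)_{qs}| ≤ Cε. -/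
/-!
The graph metric is the rank-one perturbation `1 + a aᵀ` of the identity by the gradient `a`,
so its determinant is `1 + |a|² ≥ 1` and, by the Sherman–Morrison formula, its inverse is
`1 - a aᵀ / (1 + |a|²)`. The entries of the inverse are thus quotients whose denominators are at
least `1` and whose numerators and denominators are quadratic in the gradient, hence Lipschitz
in it on the cube `|a k| ≤ M`.
-/

/-- The `k`-th partial derivative of `f : ℝ² → ℝ` at `v`. -/
noncomputable def partialDeriv₂ (f : (Fin 2 → ℝ) → ℝ) (v : Fin 2 → ℝ) (k : Fin 2) : ℝ :=
  fderiv ℝ f v (Pi.single k 1)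

/-- The graph metric of `f : ℝ² → ℝ` at `v`, with entries
`g(f)(v)_{qs} = δ_{qs} + (∂f/∂v_q)(v)·(∂f/∂v_s)(v)`. -/
noncomputable def graphMetric (f : (Fin 2 → ℝ) → ℝ) (v : Fin 2 → ℝ) :
    Matrix (Fin 2) (Fin 2) ℝ :=
  Matrix.of fun q s =>
    (if q = s then (1 : ℝ) else 0) + partialDeriv₂ f v q * partialDeriv₂ f v s

open Matrix

theorem abs_mul_sub_mul_le {x y x' y' M ε : ℝ} (hx : |x| ≤ M) (hy' : |y'| ≤ M)
    (hxx' : |x - x'| ≤ ε) (hyy' : |y - y'| ≤ ε) : |x * y - x' * y'| ≤ 2 * M * ε := by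
  have hM : 0 ≤ M := (abs_nonneg x).trans hx
  have hε : 0 ≤ ε := (abs_nonneg _).trans hxx'
  calc |x * y - x' * y'| = |x * (y - y') + (x - x') * y'| := by ring_nf
    _ ≤ |x| * |y - y'| + |x - x'| * |y'| := by
        simpa only [abs_mul] using abs_add_le (x * (y - y')) ((x - x') * y')
    _ ≤ M * ε + ε * M := by gcongr
    _ = 2 * M * ε := by ring

theorem abs_div_sub_div_le_of_one_le {f₁ f₂ D₁ D₂ : ℝ} (h₁ : 1 ≤ D₁) (h₂ : 1 ≤ D₂) :
    |f₁ / D₁ - f₂ / D₂| ≤ |f₁ - f₂| + |f₂| * |D₁ - D₂| := by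
  have hD₁ : 0 < D₁ := one_pos.trans_le h₁
  have hD₂ : 0 < D₂ := one_pos.trans_le h₂
  have hD : 1 ≤ D₁ * D₂ := one_le_mul_of_one_le_of_one_le h₁ h₂
  calc |f₁ / D₁ - f₂ / D₂| = |(f₁ - f₂) / D₁ + f₂ * (D₂ - D₁) / (D₁ * D₂)| := by
        congr 1; field_simp; ring
    _ ≤ |(f₁ - f₂) / D₁| + |f₂ * (D₂ - D₁) / (D₁ * D₂)| := abs_add_le _ _
    _ ≤ |f₁ - f₂| + |f₂| * |D₁ - D₂| := by
        rw [abs_div, abs_div, abs_mul, abs_sub_comm D₂, abs_of_pos hD₁,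
          abs_of_pos (mul_pos hD₁ hD₂)]
        gcongr
        · exact div_le_self (abs_nonneg _) h₁
        · exact div_le_self (by positivity) hD

theorem Matrix.inv_one_add_vecMulVec {K ι : Type*} [Field K] [Fintype ι] [DecidableEq ι]
    (u v : ι → K) (h : 1 + v ⬝ᵥ u ≠ 0) :
    (1 + vecMulVec u v)⁻¹ = 1 - (1 + v ⬝ᵥ u)⁻¹ • vecMulVec u v := by
  refine inv_eq_right_inv ?_
  rw [Matrix.add_mul, Matrix.one_mul, Matrix.mul_sub, Matrix.mul_one, Matrix.mul_smul,
    vecMulVec_mul_vecMulVec, vecMulVec_smul]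
  have key : (1 + v ⬝ᵥ u)⁻¹ * (1 + v ⬝ᵥ u) = 1 := inv_mul_cancel₀ h
  linear_combination (norm := module) -key • vecMulVec u v

section OneAddVecMulVecSelf

variable {ι : Type*} [Fintype ι]

theorem abs_dotProduct_self_sub_dotProduct_self_le {a b : ι → ℝ} {M ε : ℝ} (ha : ∀ k, |a k| ≤ M)
    (hb : ∀ k, |b k| ≤ M) (hab : ∀ k, |a k - b k| ≤ ε) :
    |a ⬝ᵥ a - b ⬝ᵥ b| ≤ Fintype.card ι * (2 * M * ε) := by
  calc |a ⬝ᵥ a - b ⬝ᵥ b| = |∑ k, (a k * a k - b k * b k)| := by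
        simp only [dotProduct, Finset.sum_sub_distrib]
    _ ≤ ∑ k, |a k * a k - b k * b k| := Finset.abs_sum_le_sum_abs _ _
    _ ≤ ∑ _k : ι, 2 * M * ε :=
        Finset.sum_le_sum fun k _ => abs_mul_sub_mul_le (ha k) (hb k) (hab k) (hab k)
    _ = Fintype.card ι * (2 * M * ε) := by simp

variable [DecidableEq ι]

theorem Matrix.det_one_add_vecMulVec_self (a : ι → ℝ) :
    (1 + vecMulVec a a).det = 1 + a ⬝ᵥ a := by
  rw [vecMulVec_eq Unit, det_one_add_replicateCol_mul_replicateRow]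

theorem Matrix.one_le_det_one_add_vecMulVec_self (a : ι → ℝ) :
    1 ≤ (1 + vecMulVec a a).det := by
  rw [det_one_add_vecMulVec_self]
  exact le_add_of_nonneg_right (dotProduct_self_star_nonneg a)

theorem Matrix.isUnit_one_add_vecMulVec_self (a : ι → ℝ) : IsUnit (1 + vecMulVec a a) := by
  rw [isUnit_iff_isUnit_det, isUnit_iff_ne_zero]
  exact (one_pos.trans_le (one_le_det_one_add_vecMulVec_self a)).ne'

theorem Matrix.inv_one_add_vecMulVec_self_apply (a : ι → ℝ) (q s : ι) :
    (1 + vecMulVec a a)⁻¹ q s =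
      (1 : Matrix ι ι ℝ) q s - a q * a s / (1 + vecMulVec a a).det := by
  have hD := one_le_det_one_add_vecMulVec_self a
  rw [det_one_add_vecMulVec_self] at hD ⊢
  rw [inv_one_add_vecMulVec a a (one_pos.trans_le hD).ne']
  simp [vecMulVec_apply, div_eq_inv_mul]

theorem Matrix.abs_inv_one_add_vecMulVec_self_sub_le {a b : ι → ℝ} {M ε : ℝ}
    (ha : ∀ k, |a k| ≤ M) (hb : ∀ k, |b k| ≤ M) (hab : ∀ k, |a k - b k| ≤ ε) (q s : ι) :
    |(1 + vecMulVec a a)⁻¹ q s - (1 + vecMulVec b b)⁻¹ q s| ≤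
      (2 * M + 2 * Fintype.card ι * M ^ 3) * ε := by
  have hM : 0 ≤ M := (abs_nonneg _).trans (ha q)
  rw [inv_one_add_vecMulVec_self_apply, inv_one_add_vecMulVec_self_apply,
    sub_sub_sub_cancel_left, abs_sub_comm]
  calc |a q * a s / (1 + vecMulVec a a).det - b q * b s / (1 + vecMulVec b b).det|
      ≤ |a q * a s - b q * b s| +
          |b q * b s| * |(1 + vecMulVec a a).det - (1 + vecMulVec b b).det| :=
        abs_div_sub_div_le_of_one_le (one_le_det_one_add_vecMulVec_self a)
          (one_le_det_one_add_vecMulVec_self b)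
    _ ≤ 2 * M * ε + M * M * (Fintype.card ι * (2 * M * ε)) := by
        rw [det_one_add_vecMulVec_self, det_one_add_vecMulVec_self, add_sub_add_left_eq_sub,
          abs_mul]
        gcongr
        · exact abs_mul_sub_mul_le (ha q) (hb s) (hab q) (hab s)
        · exact hb q
        · exact hb s
        · exact abs_dotProduct_self_sub_dotProduct_self_le ha hb hab
    _ = (2 * M + 2 * Fintype.card ι * M ^ 3) * ε := by ring

end OneAddVecMulVecSelf

theorem graphMetric_eq_one_add_vecMulVec (f : (Fin 2 → ℝ) → ℝ) (v : Fin 2 → ℝ) :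
    graphMetric f v = 1 + vecMulVec (partialDeriv₂ f v) (partialDeriv₂ f v) := by
  ext q s
  simp [graphMetric, one_apply, vecMulVec_apply]

theorem graphMetric_inv_approx_general (M c : ℝ) :
    ∃ C : ℝ, ∀ (z p : (Fin 2 → ℝ) → ℝ) (v : Fin 2 → ℝ) (ε : ℝ), 0 ≤ ε →
      DifferentiableAt ℝ z v → DifferentiableAt ℝ p v →
      (∀ k, |partialDeriv₂ z v k| ≤ M) →
      (∀ k, |partialDeriv₂ p v k| ≤ M) →
      (∀ k, |partialDeriv₂ z v k - partialDeriv₂ p v k| ≤ ε) →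
      c ≤ (graphMetric z v).det → c ≤ (graphMetric p v).det →
      IsUnit (graphMetric z v) ∧ IsUnit (graphMetric p v) ∧
        ∀ q s, |(graphMetric z v)⁻¹ q s - (graphMetric p v)⁻¹ q s| ≤ C * ε := by
  refine ⟨2 * M + 2 * Fintype.card (Fin 2) * M ^ 3, fun z p v ε _ _ _ hz hp hzp _ _ => ?_⟩
  simp only [graphMetric_eq_one_add_vecMulVec]
  exact ⟨isUnit_one_add_vecMulVec_self _, isUnit_one_add_vecMulVec_self _,
    abs_inv_one_add_vecMulVec_self_sub_le hz hp hzp⟩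

/-- If the first partials of `z` and `p` at `v` are bounded by `M` and `ε`-close, and both
graph-metric determinants are bounded below by `c > 0`, then the graph metrics are
invertible and the entries of their inverses are `Cε`-close, with `C` depending only on
`M` and `c`. -/
theorem graphMetric_inv_approx (M c : ℝ) (hM : 0 < M) (hc : 0 < c) :
    ∃ C : ℝ, ∀ (z p : (Fin 2 → ℝ) → ℝ) (v : Fin 2 → ℝ) (ε : ℝ), 0 ≤ ε →
      DifferentiableAt ℝ z v → DifferentiableAt ℝ p v →
      (∀ k, |partialDeriv₂ z v k| ≤ M) →
      (∀ k, |partialDeriv₂ p v k| ≤ M) →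
      (∀ k, |partialDeriv₂ z v k - partialDeriv₂ p v k| ≤ ε) →
      c ≤ (graphMetric z v).det → c ≤ (graphMetric p v).det →
      IsUnit (graphMetric z v) ∧ IsUnit (graphMetric p v) ∧
        ∀ q s, |(graphMetric z v)⁻¹ q s - (graphMetric p v)⁻¹ q s| ≤ C * ε :=
  graphMetric_inv_approx_general M c
end

section
/- Let z, p : ℝ² → ℝ be twice differentiable at a point v ∈ ℝ², let M > 0 and c > 0, and suppose: all first and second partial derivatives of z and of p at v are bounded in absolute value by M; |(∂z/∂v_k)(v) − (∂p/∂v_k)(v)| ≤ ε and |(∂²z/∂v_k∂v_t)(v) − (∂²p/∂v_k∂v_t)(v)| ≤ ε for all k, t ∈ {1,2}, with ε ≥ 0; and det g(z)(v) ≥ c, det g(p)(v) ≥ c. Then there is a constant C, depending only on M and c, such that for all q, s, t ∈ {1,2}, the Christoffel symbols of the graph metrics satisfy |Γ(z)^q_{st}(v) − Γ(p)^q_{st}(v)| ≤ Cε. -/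
/-- The second partial derivative `∂²f/∂v_k∂v_t` of `f : ℝ² → ℝ` at `v`. -/
noncomputable def partialDeriv₂₂ (f : (Fin 2 → ℝ) → ℝ) (v : Fin 2 → ℝ) (k t : Fin 2) : ℝ :=
  fderiv ℝ (fun w => fderiv ℝ f w (Pi.single t 1)) v (Pi.single k 1)

/-- The partial derivative `∂g(f)_{qs}/∂v_t` of the graph-metric entries:
`∂g(f)_{qs}/∂v_t = (∂²f/∂v_q∂v_t)(∂f/∂v_s) + (∂f/∂v_q)(∂²f/∂v_s∂v_t)`. -/
noncomputable def graphMetricDeriv (f : (Fin 2 → ℝ) → ℝ) (v : Fin 2 → ℝ) (q s t : Fin 2) : ℝ :=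
  partialDeriv₂₂ f v q t * partialDeriv₂ f v s + partialDeriv₂ f v q * partialDeriv₂₂ f v s t

/-- The Christoffel symbols `Γ(f)^q_{st}` of the graph metric of `f` at `v`:
`Γ(f)^q_{st} = ½ Σ_r (g(f)⁻¹)_{qr} (∂g(f)_{rt}/∂v_s + ∂g(f)_{rs}/∂v_t − ∂g(f)_{st}/∂v_r)`. -/
noncomputable def graphChristoffel (f : (Fin 2 → ℝ) → ℝ) (v : Fin 2 → ℝ) (q s t : Fin 2) : ℝ :=
  (1 / 2) * ∑ r : Fin 2, (graphMetric f v)⁻¹ q r *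
    (graphMetricDeriv f v r t s + graphMetricDeriv f v r s t - graphMetricDeriv f v s t r)

/-!
Every Christoffel symbol is a sum `Σ_r (g⁻¹)_{qr} Γ_{r,st}`, where the first-kind symbols
`Γ_{r,st}` are quadratic in the first and second partials and `g⁻¹ = adj g / det g`. Under the
bounds by `M`, each factor is bounded and changes by `O(ε)` when `z` is replaced by `p`; the only
non-polynomial factor is `1 / det g`, which the lower bound `det g ≥ c` keeps Lipschitz. A
telescoping of products then gives the bound `Cε`.
-/

section OrderedField

variable {𝕜 : Type*} [Field 𝕜] [LinearOrder 𝕜] [IsStrictOrderedRing 𝕜]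

theorem abs_mul_sub_mul_le_s8 {a b a' b' A B e e' : 𝕜} (ha : |a - a'| ≤ e) (hb : |b| ≤ B)
    (ha' : |a'| ≤ A) (hb' : |b - b'| ≤ e') : |a * b - a' * b'| ≤ e * B + A * e' :=
  calc |a * b - a' * b'| = |(a - a') * b + a' * (b - b')| := by ring_nf
    _ ≤ |a - a'| * |b| + |a'| * |b - b'| := by rw [← abs_mul, ← abs_mul]; exact abs_add_le _ _
    _ ≤ e * B + A * e' :=
      add_le_add (mul_le_mul ha hb (abs_nonneg _) ((abs_nonneg _).trans ha))
        (mul_le_mul ha' hb' (abs_nonneg _) ((abs_nonneg _).trans ha'))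

theorem abs_half_mul_add_sub_le {x y w K : 𝕜} (hx : |x| ≤ K) (hy : |y| ≤ K) (hw : |w| ≤ K) :
    |1 / 2 * (x + y - w)| ≤ 3 / 2 * K := by
  have hsum : |x + y - w| ≤ |x| + |y| + |w| :=
    (abs_sub _ _).trans (add_le_add_left (abs_add_le _ _) _)
  rw [abs_mul, abs_of_pos (by norm_num : (0 : 𝕜) < 1 / 2)]
  linarith

theorem abs_inv_le_inv_of_le {c d : 𝕜} (hc : 0 < c) (hd : c ≤ d) : |d⁻¹| ≤ c⁻¹ := by
  rw [abs_inv, abs_of_pos (hc.trans_le hd)]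
  exact inv_anti₀ hc hd

theorem abs_inv_sub_inv_le {c d d' E : 𝕜} (hc : 0 < c) (hd : c ≤ d) (hd' : c ≤ d')
    (h : |d - d'| ≤ E) : |d⁻¹ - d'⁻¹| ≤ E / c ^ 2 := by
  have hd₀ := hc.trans_le hd
  have hd'₀ := hc.trans_le hd'
  rw [inv_sub_inv hd₀.ne' hd'₀.ne', abs_div, abs_sub_comm, abs_of_pos (mul_pos hd₀ hd'₀), sq]
  exact div_le_div₀ ((abs_nonneg _).trans h) h (mul_pos hc hc)
    (mul_le_mul hd hd' hc.le hd₀.le)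

end OrderedField

namespace Matrix

variable {𝕜 : Type*} [Field 𝕜]

theorem inv_apply_eq_inv_det_mul_adjugate_apply (A : Matrix (Fin 2) (Fin 2) 𝕜) (i j : Fin 2) :
    A⁻¹ i j = A.det⁻¹ * A.adjugate i j := by
  simp [inv_def, Ring.inverse_eq_inv']

variable [LinearOrder 𝕜] {A B : Matrix (Fin 2) (Fin 2) 𝕜} {K e c : 𝕜}

theorem abs_adjugate_fin_two_apply_le (hA : ∀ i j, |A i j| ≤ K) (i j : Fin 2) :
    |A.adjugate i j| ≤ K := by
  rw [adjugate_fin_two]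
  fin_cases i <;> fin_cases j <;> simp [hA]

theorem abs_adjugate_sub_adjugate_fin_two_apply_le (hAB : ∀ i j, |A i j - B i j| ≤ e)
    (i j : Fin 2) : |A.adjugate i j - B.adjugate i j| ≤ e := by
  rw [adjugate_fin_two, adjugate_fin_two]
  fin_cases i <;> fin_cases j <;> simp [hAB, abs_sub_comm, ← sub_eq_neg_add]

variable [IsStrictOrderedRing 𝕜]

theorem abs_det_sub_det_fin_two_le (hA : ∀ i j, |A i j| ≤ K) (hB : ∀ i j, |B i j| ≤ K)
    (hAB : ∀ i j, |A i j - B i j| ≤ e) : |A.det - B.det| ≤ 4 * K * e := by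
  rw [det_fin_two, det_fin_two]
  calc _ = |(A 0 0 * A 1 1 - B 0 0 * B 1 1) - (A 0 1 * A 1 0 - B 0 1 * B 1 0)| := by ring_nf
    _ ≤ |A 0 0 * A 1 1 - B 0 0 * B 1 1| + |A 0 1 * A 1 0 - B 0 1 * B 1 0| := abs_sub _ _
    _ ≤ (e * K + K * e) + (e * K + K * e) :=
      add_le_add (abs_mul_sub_mul_le_s8 (hAB 0 0) (hA 1 1) (hB 0 0) (hAB 1 1))
        (abs_mul_sub_mul_le_s8 (hAB 0 1) (hA 1 0) (hB 0 1) (hAB 1 0))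
    _ = 4 * K * e := by ring

theorem abs_inv_apply_le (hA : ∀ i j, |A i j| ≤ K) (hc : 0 < c) (hdet : c ≤ A.det)
    (i j : Fin 2) : |A⁻¹ i j| ≤ c⁻¹ * K := by
  rw [inv_apply_eq_inv_det_mul_adjugate_apply, abs_mul]
  exact mul_le_mul (abs_inv_le_inv_of_le hc hdet) (abs_adjugate_fin_two_apply_le hA i j)
    (abs_nonneg _) (inv_nonneg.2 hc.le)

theorem abs_inv_apply_sub_inv_apply_le (hA : ∀ i j, |A i j| ≤ K) (hB : ∀ i j, |B i j| ≤ K)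
    (hAB : ∀ i j, |A i j - B i j| ≤ e) (hc : 0 < c) (hdetA : c ≤ A.det) (hdetB : c ≤ B.det)
    (i j : Fin 2) : |A⁻¹ i j - B⁻¹ i j| ≤ (4 * K ^ 2 / c ^ 2 + c⁻¹) * e := by
  rw [inv_apply_eq_inv_det_mul_adjugate_apply, inv_apply_eq_inv_det_mul_adjugate_apply]
  calc _ ≤ 4 * K * e / c ^ 2 * K + c⁻¹ * e :=
        abs_mul_sub_mul_le_s8
          (abs_inv_sub_inv_le hc hdetA hdetB (abs_det_sub_det_fin_two_le hA hB hAB))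
          (abs_adjugate_fin_two_apply_le hA i j) (abs_inv_le_inv_of_le hc hdetB)
          (abs_adjugate_sub_adjugate_fin_two_apply_le hAB i j)
    _ = (4 * K ^ 2 / c ^ 2 + c⁻¹) * e := by ring

end Matrix

noncomputable def graphChristoffelFirstKind (f : (Fin 2 → ℝ) → ℝ) (v : Fin 2 → ℝ)
    (r s t : Fin 2) : ℝ :=
  1 / 2 * (graphMetricDeriv f v r t s + graphMetricDeriv f v r s t - graphMetricDeriv f v s t r)

theorem graphChristoffel_eq_sum (f : (Fin 2 → ℝ) → ℝ) (v : Fin 2 → ℝ) (q s t : Fin 2) :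
    graphChristoffel f v q s t =
      ∑ r, (graphMetric f v)⁻¹ q r * graphChristoffelFirstKind f v r s t := by
  simp only [graphChristoffel, graphChristoffelFirstKind, Finset.mul_sum]
  exact Finset.sum_congr rfl fun r _ => by ring

section Bounds

variable {f z p : (Fin 2 → ℝ) → ℝ} {v : Fin 2 → ℝ} {M ε : ℝ}

theorem abs_graphMetric_apply_le (hf : ∀ k, |partialDeriv₂ f v k| ≤ M) (a b : Fin 2) :
    |graphMetric f v a b| ≤ 1 + M ^ 2 := by
  have hM : 0 ≤ M := (abs_nonneg _).trans (hf 0)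
  have hδ : |(if a = b then (1 : ℝ) else 0)| ≤ 1 := by split_ifs <;> simp
  rw [graphMetric, Matrix.of_apply]
  calc _ ≤ |(if a = b then (1 : ℝ) else 0)| + |partialDeriv₂ f v a| * |partialDeriv₂ f v b| := by
        rw [← abs_mul]; exact abs_add_le _ _
    _ ≤ 1 + M * M := by gcongr <;> simp only [hf]
    _ = 1 + M ^ 2 := by ring

theorem abs_graphMetric_sub_apply_le (hz : ∀ k, |partialDeriv₂ z v k| ≤ M)
    (hp : ∀ k, |partialDeriv₂ p v k| ≤ M)
    (hzp : ∀ k, |partialDeriv₂ z v k - partialDeriv₂ p v k| ≤ ε) (a b : Fin 2) :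
    |graphMetric z v a b - graphMetric p v a b| ≤ 2 * M * ε := by
  rw [graphMetric, graphMetric, Matrix.of_apply, Matrix.of_apply, add_sub_add_left_eq_sub]
  linarith [abs_mul_sub_mul_le_s8 (hzp a) (hz b) (hp a) (hzp b)]

theorem abs_graphMetricDeriv_le (h₁ : ∀ k, |partialDeriv₂ f v k| ≤ M)
    (h₂ : ∀ k t, |partialDeriv₂₂ f v k t| ≤ M) (q s t : Fin 2) :
    |graphMetricDeriv f v q s t| ≤ 2 * M ^ 2 := by
  have hM : 0 ≤ M := (abs_nonneg _).trans (h₁ 0)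
  rw [graphMetricDeriv]
  calc _ ≤ |partialDeriv₂₂ f v q t| * |partialDeriv₂ f v s| +
        |partialDeriv₂ f v q| * |partialDeriv₂₂ f v s t| := by
        rw [← abs_mul, ← abs_mul]; exact abs_add_le _ _
    _ ≤ M * M + M * M := by gcongr <;> simp only [h₁, h₂]
    _ = 2 * M ^ 2 := by ring

theorem abs_graphMetricDeriv_sub_le (hz₁ : ∀ k, |partialDeriv₂ z v k| ≤ M)
    (hz₂ : ∀ k t, |partialDeriv₂₂ z v k t| ≤ M) (hp₁ : ∀ k, |partialDeriv₂ p v k| ≤ M)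
    (hp₂ : ∀ k t, |partialDeriv₂₂ p v k t| ≤ M)
    (hzp₁ : ∀ k, |partialDeriv₂ z v k - partialDeriv₂ p v k| ≤ ε)
    (hzp₂ : ∀ k t, |partialDeriv₂₂ z v k t - partialDeriv₂₂ p v k t| ≤ ε) (q s t : Fin 2) :
    |graphMetricDeriv z v q s t - graphMetricDeriv p v q s t| ≤ 4 * M * ε := by
  rw [graphMetricDeriv, graphMetricDeriv, add_sub_add_comm]
  linarith [abs_add_le
      (partialDeriv₂₂ z v q t * partialDeriv₂ z v s - partialDeriv₂₂ p v q t * partialDeriv₂ p v s)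
      (partialDeriv₂ z v q * partialDeriv₂₂ z v s t - partialDeriv₂ p v q * partialDeriv₂₂ p v s t),
    abs_mul_sub_mul_le_s8 (hzp₂ q t) (hz₁ s) (hp₂ q t) (hzp₁ s),
    abs_mul_sub_mul_le_s8 (hzp₁ q) (hz₂ s t) (hp₁ q) (hzp₂ s t)]

theorem abs_graphChristoffelFirstKind_le (h₁ : ∀ k, |partialDeriv₂ f v k| ≤ M)
    (h₂ : ∀ k t, |partialDeriv₂₂ f v k t| ≤ M) (r s t : Fin 2) :
    |graphChristoffelFirstKind f v r s t| ≤ 3 * M ^ 2 :=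
  (abs_half_mul_add_sub_le (abs_graphMetricDeriv_le h₁ h₂ r t s)
    (abs_graphMetricDeriv_le h₁ h₂ r s t) (abs_graphMetricDeriv_le h₁ h₂ s t r)).trans_eq
    (by ring)

theorem abs_graphChristoffelFirstKind_sub_le (hz₁ : ∀ k, |partialDeriv₂ z v k| ≤ M)
    (hz₂ : ∀ k t, |partialDeriv₂₂ z v k t| ≤ M) (hp₁ : ∀ k, |partialDeriv₂ p v k| ≤ M)
    (hp₂ : ∀ k t, |partialDeriv₂₂ p v k t| ≤ M)
    (hzp₁ : ∀ k, |partialDeriv₂ z v k - partialDeriv₂ p v k| ≤ ε)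
    (hzp₂ : ∀ k t, |partialDeriv₂₂ z v k t - partialDeriv₂₂ p v k t| ≤ ε) (r s t : Fin 2) :
    |graphChristoffelFirstKind z v r s t - graphChristoffelFirstKind p v r s t| ≤ 6 * M * ε := by
  have hD := abs_graphMetricDeriv_sub_le hz₁ hz₂ hp₁ hp₂ hzp₁ hzp₂
  calc _ = |1 / 2 * ((graphMetricDeriv z v r t s - graphMetricDeriv p v r t s) +
        (graphMetricDeriv z v r s t - graphMetricDeriv p v r s t) -
        (graphMetricDeriv z v s t r - graphMetricDeriv p v s t r))| := by
        rw [graphChristoffelFirstKind, graphChristoffelFirstKind]; congr 1; ring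
    _ ≤ 3 / 2 * (4 * M * ε) := abs_half_mul_add_sub_le (hD r t s) (hD r s t) (hD s t r)
    _ = 6 * M * ε := by ring

end Bounds

theorem graphChristoffel_approx_general (M c : ℝ) (hc : 0 < c) :
    ∃ C : ℝ, ∀ (z p : (Fin 2 → ℝ) → ℝ) (v : Fin 2 → ℝ) (ε : ℝ), 0 ≤ ε →
      DifferentiableAt ℝ z v → DifferentiableAt ℝ p v →
      (∀ t, DifferentiableAt ℝ (fun w => fderiv ℝ z w (Pi.single t 1)) v) →
      (∀ t, DifferentiableAt ℝ (fun w => fderiv ℝ p w (Pi.single t 1)) v) →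
      (∀ k, |partialDeriv₂ z v k| ≤ M) →
      (∀ k, |partialDeriv₂ p v k| ≤ M) →
      (∀ k t, |partialDeriv₂₂ z v k t| ≤ M) →
      (∀ k t, |partialDeriv₂₂ p v k t| ≤ M) →
      (∀ k, |partialDeriv₂ z v k - partialDeriv₂ p v k| ≤ ε) →
      (∀ k t, |partialDeriv₂₂ z v k t - partialDeriv₂₂ p v k t| ≤ ε) →
      c ≤ (graphMetric z v).det → c ≤ (graphMetric p v).det →
      ∀ q s t, |graphChristoffel z v q s t - graphChristoffel p v q s t| ≤ C * ε := by
  refine ⟨2 * ((4 * (1 + M ^ 2) ^ 2 / c ^ 2 + c⁻¹) * (2 * M) * (3 * M ^ 2) +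
    c⁻¹ * (1 + M ^ 2) * (6 * M)), ?_⟩
  intro z p v ε _ _ _ _ _ hz₁ hp₁ hz₂ hp₂ hzp₁ hzp₂ hdetz hdetp q s t
  have hgz := abs_graphMetric_apply_le hz₁
  have hgp := abs_graphMetric_apply_le hp₁
  have hterm : ∀ r, |(graphMetric z v)⁻¹ q r * graphChristoffelFirstKind z v r s t -
      (graphMetric p v)⁻¹ q r * graphChristoffelFirstKind p v r s t| ≤
      (4 * (1 + M ^ 2) ^ 2 / c ^ 2 + c⁻¹) * (2 * M * ε) * (3 * M ^ 2) +
        c⁻¹ * (1 + M ^ 2) * (6 * M * ε) := fun r =>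
    abs_mul_sub_mul_le_s8
      (Matrix.abs_inv_apply_sub_inv_apply_le hgz hgp (abs_graphMetric_sub_apply_le hz₁ hp₁ hzp₁)
        hc hdetz hdetp q r)
      (abs_graphChristoffelFirstKind_le hz₁ hz₂ r s t) (Matrix.abs_inv_apply_le hgp hc hdetp q r)
      (abs_graphChristoffelFirstKind_sub_le hz₁ hz₂ hp₁ hp₂ hzp₁ hzp₂ r s t)
  rw [graphChristoffel_eq_sum, graphChristoffel_eq_sum, ← Finset.sum_sub_distrib]
  refine (Finset.abs_sum_le_sum_abs _ _).trans
    ((Finset.sum_le_sum fun r _ => hterm r).trans_eq ?_)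
  simp only [Finset.sum_const, Finset.card_univ, Fintype.card_fin, nsmul_eq_mul]
  push_cast
  ring

/-- If all first and second partials of `z` and `p` at `v` are bounded by `M` and `ε`-close,
and both graph-metric determinants are bounded below by `c > 0`, then the Christoffel
symbols of the two graph metrics are `Cε`-close, with `C` depending only on `M` and `c`. -/
theorem graphChristoffel_approx (M c : ℝ) (hM : 0 < M) (hc : 0 < c) :
    ∃ C : ℝ, ∀ (z p : (Fin 2 → ℝ) → ℝ) (v : Fin 2 → ℝ) (ε : ℝ), 0 ≤ ε →
      DifferentiableAt ℝ z v → DifferentiableAt ℝ p v →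
      (∀ t, DifferentiableAt ℝ (fun w => fderiv ℝ z w (Pi.single t 1)) v) →
      (∀ t, DifferentiableAt ℝ (fun w => fderiv ℝ p w (Pi.single t 1)) v) →
      (∀ k, |partialDeriv₂ z v k| ≤ M) →
      (∀ k, |partialDeriv₂ p v k| ≤ M) →
      (∀ k t, |partialDeriv₂₂ z v k t| ≤ M) →
      (∀ k t, |partialDeriv₂₂ p v k t| ≤ M) →
      (∀ k, |partialDeriv₂ z v k - partialDeriv₂ p v k| ≤ ε) →
      (∀ k t, |partialDeriv₂₂ z v k t - partialDeriv₂₂ p v k t| ≤ ε) →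
      c ≤ (graphMetric z v).det → c ≤ (graphMetric p v).det →
      ∀ q s t, |graphChristoffel z v q s t - graphChristoffel p v q s t| ≤ C * ε :=
  graphChristoffel_approx_general M c hc
end

section
/- Let w₀, w₁, w₂ ∈ ℝ² and let D be the 2×2 matrix whose columns are w₁ − w₀ and w₂ − w₀; assume D is invertible. Let f, f̂ : ℝ² → ℝ be affine functions (i.e., each is a linear map plus a constant) satisfying |f(w_i) − f̂(w_i)| ≤ δ for i ∈ {0,1,2}, where δ ≥ 0. Then their (constant) gradients satisfy ‖∇f − ∇f̂‖ ≤ 2√2 · ‖D⁻¹‖₂ · δ, where ‖D⁻¹‖₂ is the operator norm of D⁻¹ and ‖·‖ is the Euclidean norm on ℝ². -/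
open Matrix
open scoped Matrix.Norms.L2Operator

/-!
The vector `Dᵀ (a - â)` has entries `(a - â) ⬝ (wⱼ - w₀) = e wⱼ - e w₀` for the affine error
`e = f - f̂`, so each entry is at most `2δ` in absolute value and its Euclidean norm is at most
`2√2 δ`. Recovering `a - â` from it costs a factor `‖(Dᵀ)⁻¹‖₂ = ‖D⁻¹‖₂`.
-/

theorem EuclideanSpace.norm_le_sqrt_card_mul {ι 𝕜 : Type*} [Fintype ι] [RCLike 𝕜]
    (x : EuclideanSpace 𝕜 ι) {c : ℝ} (hc : 0 ≤ c) (hx : ∀ i, ‖x i‖ ≤ c) :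
    ‖x‖ ≤ √(Fintype.card ι) * c := by
  calc ‖x‖ = √(∑ i, ‖x i‖ ^ 2) := EuclideanSpace.norm_eq x
    _ ≤ √(∑ _ : ι, c ^ 2) := by gcongr with i; exact hx i
    _ = √(Fintype.card ι) * c := by
      rw [Finset.sum_const, Finset.card_univ, nsmul_eq_mul, Real.sqrt_mul (by positivity),
        Real.sqrt_sq hc]

theorem Matrix.l2_opNorm_transpose {m n : Type*} [Fintype m] [Fintype n] [DecidableEq m]
    [DecidableEq n] (A : Matrix m n ℝ) : ‖Aᵀ‖ = ‖A‖ := by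
  rw [← conjTranspose_eq_transpose_of_trivial, l2_opNorm_conjTranspose]

theorem Matrix.norm_toLp_le_l2_opNorm_inv_mul {n 𝕜 : Type*} [Fintype n] [DecidableEq n]
    [RCLike 𝕜] {A : Matrix n n 𝕜} (hA : IsUnit A) (x : n → 𝕜) :
    ‖WithLp.toLp 2 x‖ ≤ ‖A⁻¹‖ * ‖WithLp.toLp 2 (A *ᵥ x)‖ := by
  have hx : A⁻¹ *ᵥ (A *ᵥ x) = x := by
    rw [mulVec_mulVec, nonsing_inv_mul _ ((isUnit_iff_isUnit_det A).mp hA), one_mulVec]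
  calc ‖WithLp.toLp 2 x‖ = ‖(EuclideanSpace.equiv n 𝕜).symm (A⁻¹ *ᵥ (A *ᵥ x))‖ := by
        rw [hx]; rfl
    _ ≤ ‖A⁻¹‖ * ‖WithLp.toLp 2 (A *ᵥ x)‖ := l2_opNorm_mulVec A⁻¹ (WithLp.toLp 2 (A *ᵥ x))

theorem abs_dotProduct_sub_le_of_affine {ι R : Type*} [Fintype ι] [CommRing R] [LinearOrder R]
    [IsStrictOrderedRing R] {f : (ι → R) → R} {a : ι → R} {b : R}
    (hf : ∀ x, f x = a ⬝ᵥ x + b) {u v : ι → R} {δ : R} (hu : |f u| ≤ δ) (hv : |f v| ≤ δ) :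
    |(v - u) ⬝ᵥ a| ≤ 2 * δ := by
  have hdiff : (v - u) ⬝ᵥ a = f v - f u := by
    rw [hf, hf, sub_dotProduct, dotProduct_comm v, dotProduct_comm u]; ring
  rw [hdiff, two_mul]
  exact (abs_sub _ _).trans (add_le_add hv hu)

/-- **Stability of linear interpolation on a nondegenerate triangle.**
Let `w₀, w₁, w₂ ∈ ℝ²`, let `D` be the matrix with columns `w₁ − w₀` and `w₂ − w₀`, and
assume `D` is invertible.  If two affine functions `f(x) = ⟨a,x⟩ + b` and
`f̂(x) = ⟨â,x⟩ + b̂` satisfy `|f(wᵢ) − f̂(wᵢ)| ≤ δ` for `i = 0,1,2`, then their constant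
gradients satisfy `‖a − â‖ ≤ 2√2 ‖D⁻¹‖₂ δ` (Euclidean norm on `ℝ²`, operator 2-norm
of `D⁻¹`). -/
theorem affine_interpolation_gradient_stability
    (w₀ w₁ w₂ : Fin 2 → ℝ)
    (D : Matrix (Fin 2) (Fin 2) ℝ)
    (hD : ∀ i, D i 0 = w₁ i - w₀ i ∧ D i 1 = w₂ i - w₀ i)
    (hDinv : IsUnit D)
    (a ahat : Fin 2 → ℝ) (b bhat : ℝ)
    (f fhat : (Fin 2 → ℝ) → ℝ)
    (hf : ∀ x, f x = a ⬝ᵥ x + b)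
    (hfhat : ∀ x, fhat x = ahat ⬝ᵥ x + bhat)
    (δ : ℝ) (hδ : 0 ≤ δ)
    (h0 : |f w₀ - fhat w₀| ≤ δ)
    (h1 : |f w₁ - fhat w₁| ≤ δ)
    (h2 : |f w₂ - fhat w₂| ≤ δ) :
    Real.sqrt (∑ i, (a i - ahat i) ^ 2) ≤ 2 * Real.sqrt 2 * ‖D⁻¹‖ * δ := by
  have hdiff : ∀ x, f x - fhat x = (a - ahat) ⬝ᵥ x + (b - bhat) := fun x => by
    rw [hf, hfhat, sub_dotProduct]; ring
  have hcols : Dᵀ 0 = w₁ - w₀ ∧ Dᵀ 1 = w₂ - w₀ :=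
    ⟨funext fun i => (hD i).1, funext fun i => (hD i).2⟩
  have hentries : ∀ j, ‖(Dᵀ *ᵥ (a - ahat)) j‖ ≤ 2 * δ := by
    change ∀ j, |Dᵀ j ⬝ᵥ (a - ahat)| ≤ 2 * δ
    rw [Fin.forall_fin_two, hcols.1, hcols.2]
    exact ⟨abs_dotProduct_sub_le_of_affine hdiff h0 h1,
      abs_dotProduct_sub_le_of_affine hdiff h0 h2⟩
  calc √(∑ i, (a i - ahat i) ^ 2) = ‖WithLp.toLp 2 (a - ahat)‖ := by
        simp [EuclideanSpace.norm_eq]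
    _ ≤ ‖Dᵀ⁻¹‖ * ‖WithLp.toLp 2 (Dᵀ *ᵥ (a - ahat))‖ :=
        norm_toLp_le_l2_opNorm_inv_mul (isUnit_transpose D |>.mpr hDinv) _
    _ ≤ ‖D⁻¹‖ * (√2 * (2 * δ)) := by
        rw [← transpose_nonsing_inv, l2_opNorm_transpose]
        gcongr
        exact (EuclideanSpace.norm_le_sqrt_card_mul _ (by positivity) hentries).trans_eq
          (by rw [Fintype.card_fin, Nat.cast_ofNat])
    _ = 2 * √2 * ‖D⁻¹‖ * δ := by ring
end
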